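/- arXiv:1609.08101 — 2 statements merged into one kernel-verified Lean document; each statement's English description precedes it below -/
import Mathlib

section
/- Suppose h : ℝ^m → (0,∞) is continuous and h(x) ≥ (ξ‖x‖^q + ζ)⁻¹ for constants ξ, ζ, q > 0, and a timestep function h^δ satisfies δ·min(T, h(x)) ≤ h^δ(x) for all x, with 0 < δ ≤ 1 and T > 0. Then for any path with sup_{0≤t≤T}‖X̂_t‖ ≤ M, the number of timesteps N_T of the adaptive scheme with timestep h^δ satisfies N_T ≤ δ⁻¹ T (ξ M^q + ζ + (1+δ)T⁻¹). -/
theorem timestep_count_bound_delta (m : ℕ) (ξ ζ q T M δ : ℝ)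
    (hξ : 0 < ξ) (hζ : 0 < ζ) (hq : 0 < q) (hT : 0 < T) (hδ : 0 < δ) (hδ1 : δ ≤ 1)
    (h : EuclideanSpace ℝ (Fin m) → ℝ) (hcont : Continuous h) (hpos : ∀ x, 0 < h x)
    (hlb : ∀ x, h x ≥ (ξ * ‖x‖ ^ q + ζ)⁻¹)
    (hδfun : EuclideanSpace ℝ (Fin m) → ℝ)
    (hδlb : ∀ x, δ * min T (h x) ≤ hδfun x)
    (X : ℕ → EuclideanSpace ℝ (Fin m)) (t : ℕ → ℝ)
    (ht0 : t 0 = 0) (htn : ∀ n, t (n + 1) = t n + hδfun (X n))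
    (hM : ∀ n, t n ≤ T → ‖X n‖ ≤ M)
    (N : ℕ) (hN : T ≤ t N) (hNmin : ∀ n < N, t n < T) :
    (N : ℝ) ≤ δ⁻¹ * T * (ξ * M ^ q + ζ + (1 + δ) * T⁻¹) := by
  have hM0 : 0 ≤ M := le_trans (norm_nonneg (X 0)) (hM 0 (by rw [ht0]; exact hT.le))
  set A := ξ * M ^ q + ζ with hA
  have hApos : 0 < A :=
    add_pos_of_nonneg_of_pos (mul_nonneg hξ.le (Real.rpow_nonneg hM0 q)) hζ
  set c := min T A⁻¹ with hc
  have hcpos : 0 < c := lt_min hT (inv_pos.mpr hApos)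
  have hN1 : 1 ≤ N := by
    rcases Nat.eq_zero_or_pos N with h0 | h1
    · exfalso; rw [h0, ht0] at hN; linarith
    · exact h1
  have step : ∀ n, n < N → δ * c ≤ hδfun (X n) := by
    intro n hn
    have hXn : ‖X n‖ ≤ M := hM n (hNmin n hn).le
    have h1 : A⁻¹ ≤ h (X n) := by
      refine le_trans ?_ (hlb (X n))
      apply inv_anti₀
      · exact add_pos_of_nonneg_of_pos
          (mul_nonneg hξ.le (Real.rpow_nonneg (norm_nonneg _) q)) hζ
      · have : ‖X n‖ ^ q ≤ M ^ q := Real.rpow_le_rpow (norm_nonneg _) hXn hq.le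
        nlinarith
    have h2 : c ≤ min T (h (X n)) := min_le_min le_rfl h1
    calc δ * c ≤ δ * min T (h (X n)) := by nlinarith
      _ ≤ hδfun (X n) := hδlb (X n)
  have lower : ∀ n, n ≤ N → (n : ℝ) * (δ * c) ≤ t n := by
    intro n hn
    induction n with
    | zero => simp [ht0]
    | succ k ih =>
      have hk : k < N := hn
      have h1 := ih hk.le
      have h2 := step k hk
      rw [htn k]
      push_cast
      nlinarith
  have hfin : ((N : ℝ) - 1) * (δ * c) < T := by
    have h1 := lower (N - 1) (Nat.sub_le N 1)
    have h2 := hNmin (N - 1) (Nat.sub_lt (by omega) one_pos)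
    have h3 : ((N - 1 : ℕ) : ℝ) = (N : ℝ) - 1 := by
      rw [Nat.cast_sub hN1]; norm_num
    rw [h3] at h1
    linarith
  have hδc : 0 < δ * c := mul_pos hδ hcpos
  have hNd : (N : ℝ) - 1 < T / (δ * c) := (lt_div_iff₀ hδc).mpr hfin
  have hcinv : c⁻¹ ≤ T⁻¹ + A := by
    rcases le_total T A⁻¹ with hca | hca
    · rw [hc, min_eq_left hca]; linarith
    · rw [hc, min_eq_right hca, inv_inv]
      have : 0 < T⁻¹ := inv_pos.mpr hT
      linarith
  have key : T / (δ * c) ≤ δ⁻¹ * T * (T⁻¹ + A) := by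
    rw [div_eq_mul_inv, mul_inv]
    calc T * (δ⁻¹ * c⁻¹) = δ⁻¹ * T * c⁻¹ := by ring
      _ ≤ δ⁻¹ * T * (T⁻¹ + A) := by
          apply mul_le_mul_of_nonneg_left hcinv
          positivity
  have heq : δ⁻¹ * T * (A + (1 + δ) * T⁻¹) = δ⁻¹ * T * (T⁻¹ + A) + 1 := by
    field_simp
    ring
  rw [hA] at heq ⊢
  linarith
end

section
/- For the stochastic Ginzburg-Landau drift f(x) = (η + σ²/2)x − λx³ on ℝ, with η ≥ 0 and λ, σ > 0, the timestep function h(x) = min(T, λ⁻¹x⁻²) (with h(0) = T) satisfies x·f(x) + (1/2)h(x)f(x)² ≤ α x² + β for suitable constants α, β > 0 depending only on η, σ, λ, T. -/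
theorem ginzburg_landau_timestep (η σ lam T : ℝ)
    (hη : 0 ≤ η) (hσ : 0 < σ) (hlam : 0 < lam) (hT : 0 < T) :
    ∃ α β : ℝ, 0 < α ∧ 0 < β ∧
      ∀ x : ℝ,
        let f : ℝ → ℝ := fun x => (η + σ ^ 2 / 2) * x - lam * x ^ 3
        let h : ℝ → ℝ := fun x => if x = 0 then T else min T (lam⁻¹ * x⁻¹ ^ 2)
        x * f x + (1 / 2) * h x * (f x) ^ 2 ≤ α * x ^ 2 + β := by
  set c := η + σ ^ 2 / 2 with hc
  refine ⟨1, c ^ 2 / (2 * lam) + 1, one_pos, by positivity, ?_⟩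
  intro x f h
  by_cases hx : x = 0
  · simp only [f, h, hx, if_true]
    norm_num
    positivity
  · have hb : h x ≤ lam⁻¹ * x⁻¹ ^ 2 := by
      simp only [h, hx, if_false]
      exact min_le_right _ _
    have h2 : x * f x + (1 / 2) * (lam⁻¹ * x⁻¹ ^ 2) * (f x) ^ 2
        = c ^ 2 / (2 * lam) - (lam / 2) * x ^ 4 := by
      simp only [f]
      field_simp
      ring
    have h3 : (1 / 2) * h x * (f x) ^ 2 ≤ (1 / 2) * (lam⁻¹ * x⁻¹ ^ 2) * (f x) ^ 2 := by
      have := sq_nonneg (f x)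
      nlinarith
    nlinarith [sq_nonneg (x ^ 2), sq_nonneg x, hlam.le]
end
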